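/- For a field F with at least 4 elements, the expression C(x) = [x] + ⟨−1⟩[1−x] + ⟨⟨1−x⟩⟩ψ₁(x) in the refined pre-Bloch group RP(F) is independent of x; i.e., C(x) = C(y) for all x, y ∈ F \ {0,1}. -/

import Mathlib

open scoped Classical

variable (F : Type) [Field F]

/-- The subgroup of squares in `F^×`. -/
def sqSubgroup : Subgroup Fˣ := MonoidHom.range (powMonoidHom 2 : Fˣ →* Fˣ)

/-- The square class group `F^×/(F^×)²`. -/
def SqClassGroup : Type := Fˣ ⧸ sqSubgroup F

instance : CommGroup (SqClassGroup F) := inferInstanceAs (CommGroup (Fˣ ⧸ sqSubgroup F))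

/-- The group ring `R_F = ℤ[F^×/(F^×)²]`. -/
abbrev GrpRing := MonoidAlgebra ℤ (SqClassGroup F)

/-- `⟨x⟩ ∈ R_F`, the square class of `x ∈ F^×` (with the junk convention `⟨0⟩ = 1`). -/
noncomputable def cls (x : F) : GrpRing F :=
  if h : x = 0 then 1
  else MonoidAlgebra.of ℤ (SqClassGroup F)
    (QuotientGroup.mk (Units.mk0 x h) : Fˣ ⧸ sqSubgroup F)

/-- The relators of the refined pre-Bloch group: `[0]`, `[1]` and the refined five-term
relators `S_{x,y}`, inside the free `R_F`-module on the set `F` of generator labels. -/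
noncomputable def refinedRels : Set (F →₀ GrpRing F) :=
  {Finsupp.single (0 : F) 1, Finsupp.single (1 : F) 1} ∪
  {z | ∃ x y : F, x ≠ 0 ∧ x ≠ 1 ∧ y ≠ 0 ∧ y ≠ 1 ∧ x ≠ y ∧
    z = Finsupp.single x 1 - Finsupp.single y 1
        + Finsupp.single (y / x) (cls F x)
        - Finsupp.single ((1 - x⁻¹) / (1 - y⁻¹)) (cls F (x⁻¹ - 1))
        + Finsupp.single ((1 - x) / (1 - y)) (cls F (1 - x))}

/-- The refined pre-Bloch group `RP(F)`: the `R_F`-module with generators `[x]`, `x ∈ F^×`,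
subject to `[1] = 0` and the refined five-term relations `S_{x,y}`. -/
abbrev RP := (F →₀ GrpRing F) ⧸ Submodule.span (GrpRing F) (refinedRels F)

/-- The generator `[x]` of `RP(F)`. -/
noncomputable def gen (x : F) : RP F :=
  Submodule.Quotient.mk (Finsupp.single x 1)

/-- `ψ₁(x) = [x] + ⟨-1⟩[x⁻¹]`. -/
noncomputable def psi1 (x : F) : RP F := gen F x + cls F (-1) • gen F x⁻¹

/-- `ψ₂(x) = ⟨x⁻¹-1⟩[x] + ⟨1-x⟩[x⁻¹]` for `x ≠ 1`, and `ψ₂(1) = 0`. -/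
noncomputable def psi2 (x : F) : RP F :=
  if x = 1 then 0 else cls F (x⁻¹ - 1) • gen F x + cls F (1 - x) • gen F x⁻¹


/-- The expression `C(x) = [x] + ⟨-1⟩[1-x] + ⟨⟨1-x⟩⟩ψ₁(x)` in `RP(F)`. -/
noncomputable def Cexpr (x : F) : RP F :=
  gen F x + cls F (-1) • gen F (1 - x) + (cls F (1 - x) - 1) • psi1 F x

/-
`C(x) - C(y)` is an `R_F`-combination of the five-term relations `S_{x,y}`, `S_{1-x,1-y}` and
of the cocycle identity `⟨a⟩ψ₁(b/a) = ψ₁(b) - ψ₁(a)` (which is `S_{a,b} + ⟨-1⟩S_{a⁻¹,b⁻¹}`) at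
the pairs `(x, y)`, `(x, t)`, `(w, t)`, where `w = (1-x)/(1-y)` and `t = yw`. This needs `t ≠ 1`,
i.e. `y(1-x) ≠ 1-y`. If this fails for both orders of `x, y`, then `char F = 2` and `y = x⁻¹`:
either `1 - x` is a third point through which to pass, or `1 - x = y` (as in `𝔽₄`) and the two
expressions visibly agree, because `⟨-1⟩ = 1` and `⟨x⟩ = ⟨x⁻¹⟩`.
-/

lemma cls_of_ne_zero {a : F} (ha : a ≠ 0) :
    cls F a = MonoidAlgebra.of ℤ (SqClassGroup F) (QuotientGroup.mk (Units.mk0 a ha)) :=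
  dif_neg ha

lemma cls_one : cls F 1 = 1 := by
  rw [cls_of_ne_zero F one_ne_zero, ← map_one (MonoidAlgebra.of ℤ (SqClassGroup F))]
  congr
  ext; rfl

lemma cls_mul {a b : F} (ha : a ≠ 0) (hb : b ≠ 0) : cls F (a * b) = cls F a * cls F b := by
  rw [cls_of_ne_zero F ha, cls_of_ne_zero F hb, cls_of_ne_zero F (mul_ne_zero ha hb),
    Units.mk0_mul a b (mul_ne_zero ha hb), QuotientGroup.mk_mul]
  exact map_mul (MonoidAlgebra.of ℤ (SqClassGroup F)) _ _

lemma cls_mul_self (a : F) : cls F a * cls F a = 1 := by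
  by_cases ha : a = 0
  · simp [cls, ha]
  rw [← cls_mul F ha ha, cls_of_ne_zero F (mul_ne_zero ha ha),
    ← map_one (MonoidAlgebra.of ℤ (SqClassGroup F))]
  exact congrArg _ ((QuotientGroup.eq_one_iff _).mpr ⟨Units.mk0 a ha, by ext; simp [sq]⟩)

lemma cls_inv (a : F) : cls F a⁻¹ = cls F a := by
  by_cases ha : a = 0
  · rw [ha, inv_zero]
  calc cls F a⁻¹ = cls F a⁻¹ * (cls F a * cls F a) := by rw [cls_mul_self, mul_one]
    _ = cls F (a⁻¹ * a) * cls F a := by rw [cls_mul F (inv_ne_zero ha) ha, mul_assoc]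
    _ = cls F a := by rw [inv_mul_cancel₀ ha, cls_one, one_mul]

lemma cls_div {a b : F} (ha : a ≠ 0) (hb : b ≠ 0) : cls F (a / b) = cls F a * cls F b := by
  rw [div_eq_mul_inv, cls_mul F ha (inv_ne_zero hb), cls_inv]

lemma cls_neg {a : F} (ha : a ≠ 0) : cls F (-a) = cls F (-1) * cls F a := by
  rw [neg_eq_neg_one_mul, cls_mul F (neg_ne_zero.mpr one_ne_zero) ha]

lemma gen_five_term {a b : F} (ha0 : a ≠ 0) (ha1 : a ≠ 1) (hb0 : b ≠ 0) (hb1 : b ≠ 1)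
    (hab : a ≠ b) :
    gen F a - gen F b + cls F a • gen F (b / a)
      - cls F (a⁻¹ - 1) • gen F ((1 - a⁻¹) / (1 - b⁻¹))
      + cls F (1 - a) • gen F ((1 - a) / (1 - b)) = 0 := by
  have hmk : ∀ (l : F) (c : GrpRing F),
      (Submodule.Quotient.mk (Finsupp.single l c) : RP F) = c • gen F l := fun l c => by
    rw [gen, ← Submodule.Quotient.mk_smul, Finsupp.smul_single', mul_one]
  have hrel := (Submodule.Quotient.mk_eq_zero _).mpr
    (Submodule.subset_span (Or.inr ⟨a, b, ha0, ha1, hb0, hb1, hab, rfl⟩) :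
      _ ∈ Submodule.span (GrpRing F) (refinedRels F))
  simpa only [Submodule.Quotient.mk_add, Submodule.Quotient.mk_sub, hmk, one_smul] using hrel

lemma cls_sub_comm {a b : F} (hab : a ≠ b) : cls F (a - b) = cls F (-1) * cls F (b - a) := by
  rw [← neg_sub, cls_neg F (sub_ne_zero.mpr hab.symm)]

lemma smul_psi1_div {a b : F} (ha0 : a ≠ 0) (ha1 : a ≠ 1) (hb0 : b ≠ 0) (hb1 : b ≠ 1)
    (hab : a ≠ b) :
    cls F a • psi1 F (b / a) = psi1 F b - psi1 F a := by
  have h := gen_five_term F ha0 ha1 hb0 hb1 hab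
  have hinv := gen_five_term F (inv_ne_zero ha0) (inv_ne_one.mpr ha1) (inv_ne_zero hb0)
    (inv_ne_one.mpr hb1) (inv_injective.ne hab)
  rw [inv_inv, inv_inv, inv_div_inv, ← inv_div, cls_inv, cls_sub_comm F ha1,
    cls_sub_comm F (inv_ne_one.mpr ha1).symm] at hinv
  have hsq := cls_mul_self F (-1)
  unfold psi1
  linear_combination (norm := module) h + cls F (-1) • hinv
    - hsq • (cls F (a⁻¹ - 1) • gen F ((1 - a⁻¹) / (1 - b⁻¹))
      - cls F (1 - a) • gen F ((1 - a) / (1 - b)))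

lemma cls_inv_sub_one {a : F} (ha0 : a ≠ 0) (ha1 : a ≠ 1) :
    cls F (a⁻¹ - 1) = cls F (1 - a) * cls F a := by
  rw [show a⁻¹ - 1 = (1 - a) / a by field_simp, cls_div F (sub_ne_zero.mpr ha1.symm) ha0]

lemma one_sub_inv_one_sub {K : Type*} [Field K] {c : K} (h0 : c ≠ 0) (h1 : c ≠ 1) :
    1 - (1 - c)⁻¹ = (1 - c⁻¹)⁻¹ := by
  have : 1 - c ≠ 0 := sub_ne_zero.mpr h1.symm
  have : c - 1 ≠ 0 := sub_ne_zero.mpr h1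
  field_simp
  ring

lemma gen_five_term_one_sub {a b : F} (ha0 : a ≠ 0) (ha1 : a ≠ 1) (hb0 : b ≠ 0)
    (hb1 : b ≠ 1) (hab : a ≠ b) :
    gen F (1 - a) - gen F (1 - b) + cls F (1 - a) • gen F ((1 - a) / (1 - b))⁻¹
      - (cls F a * cls F (1 - a)) • gen F ((1 - a⁻¹) / (1 - b⁻¹))⁻¹
      + cls F a • gen F (b / a)⁻¹ = 0 := by
  have ha1' : 1 - a ≠ 1 := fun h => ha0 (sub_eq_self.mp h)
  have h := gen_five_term F (sub_ne_zero.mpr ha1.symm) ha1' (sub_ne_zero.mpr hb1.symm)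
    (fun h => hb0 (sub_eq_self.mp h)) (sub_right_injective.ne hab)
  rw [cls_inv_sub_one F (sub_ne_zero.mpr ha1.symm) ha1', one_sub_inv_one_sub ha0 ha1,
    one_sub_inv_one_sub hb0 hb1, inv_div_inv, sub_sub_cancel, sub_sub_cancel] at h
  simpa only [inv_div] using h

lemma Cexpr_eq_of_mul_one_sub_ne {x y : F} (hx0 : x ≠ 0) (hx1 : x ≠ 1) (hy0 : y ≠ 0)
    (hy1 : y ≠ 1) (hxy : x ≠ y) (h : y * (1 - x) ≠ 1 - y) :
    Cexpr F x = Cexpr F y := by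
  have hx1' : 1 - x ≠ 0 := sub_ne_zero.mpr hx1.symm
  have hy1' : 1 - y ≠ 0 := sub_ne_zero.mpr hy1.symm
  obtain ⟨w, hw⟩ : ∃ w, w = (1 - x) / (1 - y) := ⟨_, rfl⟩
  obtain ⟨t, ht⟩ : ∃ t, t = y * w := ⟨_, rfl⟩
  have hw0 : w ≠ 0 := hw ▸ div_ne_zero hx1' hy1'
  have hw1 : w ≠ 1 := fun hw1 => hxy <| by
    rw [hw, div_eq_one_iff_eq hy1'] at hw1; linear_combination -hw1
  have ht0 : t ≠ 0 := ht ▸ mul_ne_zero hy0 hw0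
  have ht1 : t ≠ 1 := fun ht1 => h <| by
    rw [ht, hw, mul_div_assoc', div_eq_one_iff_eq hy1'] at ht1; exact ht1
  have hxt : x ≠ t := fun hxt => hxy <| by
    rw [ht, hw] at hxt; field_simp at hxt; linear_combination hxt
  have hwt : w ≠ t := fun hwt => hy1 <| by
    rw [ht, eq_comm, mul_eq_right₀ hw0] at hwt; exact hwt
  have hP : (1 - x⁻¹) / (1 - y⁻¹) = t / x := by rw [ht, hw]; field_simp; ring
  have hSxy := gen_five_term F hx0 hx1 hy0 hy1 hxy
  rw [cls_inv_sub_one F hx0 hx1, ← hw, hP] at hSxy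
  have hSone_sub := gen_five_term_one_sub F hx0 hx1 hy0 hy1 hxy
  rw [← hw, hP] at hSone_sub
  have hψxy := smul_psi1_div F hx0 hx1 hy0 hy1 hxy
  have hψxt := smul_psi1_div F hx0 hx1 ht0 ht1 hxt
  have hψwt := smul_psi1_div F hw0 hw1 ht0 ht1 hwt
  rw [ht, mul_div_cancel_right₀ y hw0, ← ht, hw, cls_div F hx1' hy1', ← hw] at hψwt
  have hsq := cls_mul_self F (1 - x)
  unfold Cexpr psi1 at *
  linear_combination (norm := module)
    hSxy + cls F (-1) • hSone_sub - hψxy + cls F (1 - x) • hψxt - cls F (1 - x) • hψwt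
    + hsq • (cls F (1 - y) • (gen F y + cls F (-1) • gen F y⁻¹))

lemma Cexpr_eq_of_ne {x y : F} (hx0 : x ≠ 0) (hx1 : x ≠ 1) (hy0 : y ≠ 0) (hy1 : y ≠ 1)
    (hxy : x ≠ y) (h : x * y ≠ 1 ∨ (2 : F) ≠ 0) :
    Cexpr F x = Cexpr F y := by
  by_cases hyx : y * (1 - x) = 1 - y
  · by_cases hxy' : x * (1 - y) = 1 - x
    · have h2 : (2 : F) = 0 := by
        have : (2 : F) * (x - y) = 0 := by linear_combination hxy' - hyx
        exact (mul_eq_zero.mp this).resolve_right (sub_ne_zero.mpr hxy)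
      have hxy1 : x * y = 1 := by linear_combination -hyx + (y - 1) * h2
      exact h.elim (absurd hxy1) (absurd h2)
    · exact (Cexpr_eq_of_mul_one_sub_ne F hy0 hy1 hx0 hx1 hxy.symm hxy').symm
  · exact Cexpr_eq_of_mul_one_sub_ne F hx0 hx1 hy0 hy1 hxy hyx

lemma Cexpr_eq_of_two_eq_zero_of_one_sub_eq {x y : F} (h2 : (2 : F) = 0) (hxy : x * y = 1)
    (hsub : 1 - x = y) :
    Cexpr F x = Cexpr F y := by
  have hxinv : x⁻¹ = y := inv_eq_of_mul_eq_one_right hxy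
  have hyinv : y⁻¹ = x := inv_eq_of_mul_eq_one_left hxy
  have hneg : cls F (-1) = 1 := by
    rw [show (-1 : F) = 1 by linear_combination -h2, cls_one]
  have hcls : cls F x = cls F y := by rw [← hxinv, cls_inv]
  unfold Cexpr psi1
  rw [hsub, show 1 - y = x by linear_combination hsub, hxinv, hyinv, hneg, hcls]
  module

theorem Cexpr_constant
    (x y : F) (hx0 : x ≠ 0) (hx1 : x ≠ 1) (hy0 : y ≠ 0) (hy1 : y ≠ 1) :
    Cexpr F x = Cexpr F y := by
  rcases eq_or_ne x y with rfl | hxy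
  · rfl
  by_cases h : x * y ≠ 1 ∨ (2 : F) ≠ 0
  · exact Cexpr_eq_of_ne F hx0 hx1 hy0 hy1 hxy h
  obtain ⟨hxy1, h2⟩ : x * y = 1 ∧ (2 : F) = 0 := by simpa only [not_or, not_not] using h
  by_cases hsub : 1 - x = y
  · exact Cexpr_eq_of_two_eq_zero_of_one_sub_eq F h2 hxy1 hsub
  have hz0 : 1 - x ≠ 0 := sub_ne_zero.mpr hx1.symm
  have hz1 : 1 - x ≠ 1 := fun h => hx0 (sub_eq_self.mp h)
  have hxz : x ≠ 1 - x := fun h => one_ne_zero (by linear_combination x * h2 - h)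
  calc Cexpr F x = Cexpr F (1 - x) := Cexpr_eq_of_ne F hx0 hx1 hz0 hz1 hxz
        (Or.inl fun h => hsub (mul_left_cancel₀ hx0 (h.trans hxy1.symm)))
    _ = Cexpr F y := Cexpr_eq_of_ne F hz0 hz1 hy0 hy1 hsub
        (Or.inl fun h => hxz (mul_right_cancel₀ hy0 (hxy1.trans h.symm)))
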